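/- Let p be a positive rational with √p irrational, and let x₁ = a₁ + b₁√p, …, xₙ = aₙ + bₙ√p (n ≥ 2) with all aᵢ, bᵢ ∈ ℚ, all xᵢ > 0, and such that xᵢ/xⱼ ∉ ℚ and xᵢ·xⱼ ∉ ℚ whenever i ≠ j. Suppose aᵢ − bᵢ√p < 0 for all i, and let z = e + f√p > 0 with e, f ∈ ℚ, f > 0 and |e|/f = max_{1 ≤ i ≤ n} |aᵢ|/bᵢ. Then the rectangle of aspect ratio z admits NO diverse tiling by rectangles with aspect ratios x₁, …, xₙ. -/

import Mathlib

/-- A tiling of the rectangle `[0,1] × [0,r]` by finitely many closed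
axis-parallel rectangles with positive side lengths, covering the rectangle
and having pairwise disjoint interiors. -/
structure RectTiling (r : ℝ) where
  m : ℕ
  px : Fin m → ℝ
  py : Fin m → ℝ
  w : Fin m → ℝ
  h : Fin m → ℝ
  w_pos : ∀ k, 0 < w k
  h_pos : ∀ k, 0 < h k
  cover : (Set.Icc (0:ℝ) 1 ×ˢ Set.Icc (0:ℝ) r) =
      ⋃ k, Set.Icc (px k) (px k + w k) ×ˢ Set.Icc (py k) (py k + h k)
  disj : ∀ k l, k ≠ l →
      Disjoint ((Set.Ioo (px k) (px k + w k)) ×ˢ (Set.Ioo (py k) (py k + h k)))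
               ((Set.Ioo (px l) (px l + w l)) ×ˢ (Set.Ioo (py l) (py l + h l)))

/-- Tile `k` of the tiling `T` has aspect ratio `x` (in one of the two orientations). -/
def RectTiling.ratioOK {r : ℝ} (T : RectTiling r) (k : Fin T.m) (x : ℝ) : Prop :=
  T.h k / T.w k = x ∨ T.w k / T.h k = x

/-- The rectangle of aspect ratio `r` is tileable by rectangles with aspect
ratios among `X`. -/
def Tileable (r : ℝ) {n : ℕ} (X : Fin n → ℝ) : Prop :=
  ∃ T : RectTiling r, ∀ k, ∃ i, T.ratioOK k (X i)

/-- The rectangle of aspect ratio `r` admits a *diverse* tiling by rectangles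
with aspect ratios `X 0, …, X (n-1)`: every tile has some ratio `X i`, and for
every `i` some tile has ratio `X i`. -/
def DiverselyTileable (r : ℝ) {n : ℕ} (X : Fin n → ℝ) : Prop :=
  ∃ T : RectTiling r, (∀ k, ∃ i, T.ratioOK k (X i)) ∧ (∀ i, ∃ k, T.ratioOK k (X i))

/-!
Dehn's argument. For every biadditive `F`, refining a tiling of `[0,1] × [0,z]` to the grid of
all its edge coordinates gives `∑ₖ F (wₖ, hₖ) = F (1, z)`.

Extend `a + b√p ↦ a` to a `ℚ`-linear `ψ : ℝ → ℚ`. Then `v ↦ (v₁, v₂) := (ψ v, ψ (√p v) / p)`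
are the coordinates of a `ℚ(√p)`-linear map `ℝ → ℚ(√p)`, and for `z = e + f√p` the form
`F (v, v') = e ((f v₁ - e v₂) (f v₁' - e v₂') - (p f² - e²) v₂ v₂')` vanishes at `(1, z)`.
On a tile with sides `u` and `(a + b√p) u`, writing `s = f u₁ - e u₂` and `t = u₂`,
`f F = e (a f - e b) s² - (p f² - e²) e (a f + e b) t²`.
Since `|aᵢ| < bᵢ √p` we have `e² < p f²`, so this is `≤ 0` whenever `|a| / b ≤ |e| / f`, and
`< 0` if moreover the inequality is strict and `(s, t) ≠ 0`. The ratios `|aᵢ| / bᵢ` are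
pairwise distinct (equality makes `xᵢ / xⱼ` or `xᵢ xⱼ` rational), so one of them lies below the
maximum `|e| / f`. Diversity gives a tile with that ratio, and `ψ` can be chosen so that its side
`u` has nonzero coordinates; then the sum is negative, a contradiction.
-/

open Finset

lemma Finset.exists_strictMono_subset_range (s : Finset ℝ) :
    ∃ g : ℕ → ℝ, StrictMono g ∧ ↑s ⊆ Set.range g := by
  set e := s.orderEmbOfFin rfl
  set C := ∑ x ∈ s, |x|
  have hC : ∀ x ∈ s, x ≤ C := fun x hx =>
    (le_abs_self x).trans (single_le_sum (fun y _ => abs_nonneg y) hx)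
  refine ⟨fun i => if h : i < s.card then e ⟨i, h⟩ else C + i,
    strictMono_nat_of_lt_succ fun i => ?_, fun x hx => ?_⟩
  · by_cases h : i + 1 < s.card
    · simp only [h, (Nat.lt_succ_self i).trans h, dite_true]
      exact e.strictMono (Nat.lt_succ_self i)
    · by_cases h' : i < s.card
      · simp only [h, h', dite_true, dite_false]
        push_cast
        linarith [hC _ (s.orderEmbOfFin_mem rfl ⟨i, h'⟩), (i.cast_nonneg : (0 : ℝ) ≤ i)]
      · simp only [h, h', dite_false]
        push_cast
        linarith
  · obtain ⟨i, rfl⟩ : x ∈ Set.range e := by rw [range_orderEmbOfFin]; exact hx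
    exact ⟨i, by simp [i.2]⟩

section Grid

variable {g : ℕ → ℝ}

noncomputable def cellCenter (g : ℕ → ℝ) (ij : ℕ × ℕ) : ℝ × ℝ :=
  ((g ij.1 + g (ij.1 + 1)) / 2, (g ij.2 + g (ij.2 + 1)) / 2)

lemma StrictMono.midpoint_mem_Ioo_iff (hg : StrictMono g) {a b i : ℕ} :
    (g i + g (i + 1)) / 2 ∈ Set.Ioo (g a) (g b) ↔ i ∈ Ico a b := by
  have hi := hg (Nat.lt_succ_self i)
  rw [mem_Ico, Set.mem_Ioo]
  constructor
  · rintro ⟨ha, hb⟩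
    exact ⟨Nat.lt_succ_iff.1 (hg.lt_iff_lt.1 (by linarith)), hg.lt_iff_lt.1 (by linarith)⟩
  · rintro ⟨ha, hb⟩
    have := hg.monotone ha
    have := hg.monotone (Nat.succ_le_of_lt hb)
    constructor <;> linarith

lemma StrictMono.midpoint_mem_Icc_iff (hg : StrictMono g) {a b i : ℕ} :
    (g i + g (i + 1)) / 2 ∈ Set.Icc (g a) (g b) ↔ i ∈ Ico a b := by
  refine ⟨fun h => ?_, fun h => Set.Ioo_subset_Icc_self (hg.midpoint_mem_Ioo_iff.2 h)⟩
  have hi := hg (Nat.lt_succ_self i)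
  rw [mem_Ico]
  constructor
  · by_contra! hia
    linarith [h.1, hg.monotone (Nat.succ_le_of_lt hia)]
  · by_contra! hbi
    linarith [h.2, hg.monotone hbi]

lemma StrictMono.cellCenter_mem_Ioo_iff (hg : StrictMono g) {a b c d : ℕ} (ij : ℕ × ℕ) :
    cellCenter g ij ∈ Set.Ioo (g a) (g b) ×ˢ Set.Ioo (g c) (g d) ↔ ij ∈ Ico a b ×ˢ Ico c d := by
  simp only [cellCenter, Set.mem_prod, mem_product, hg.midpoint_mem_Ioo_iff]

lemma StrictMono.cellCenter_mem_Icc_iff (hg : StrictMono g) {a b c d : ℕ} (ij : ℕ × ℕ) :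
    cellCenter g ij ∈ Set.Icc (g a) (g b) ×ˢ Set.Icc (g c) (g d) ↔ ij ∈ Ico a b ×ˢ Ico c d := by
  simp only [cellCenter, Set.mem_prod, mem_product, hg.midpoint_mem_Icc_iff]

lemma sum_Ico_product_sub {A : Type*} [AddCommMonoid A] (F : ℝ →+ ℝ →+ A) (g : ℕ → ℝ)
    {a b c d : ℕ} (hab : a ≤ b) (hcd : c ≤ d) :
    ∑ ij ∈ Ico a b ×ˢ Ico c d, F (g (ij.1 + 1) - g ij.1) (g (ij.2 + 1) - g ij.2) =
      F (g b - g a) (g d - g c) := by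
  have hinner : ∀ x, ∑ j ∈ Ico c d, F x (g (j + 1) - g j) = F x (g d - g c) := fun x => by
    rw [← map_sum, sum_Ico_sub g hcd]
  rw [sum_product]
  simp only [hinner]
  rw [← AddMonoidHom.finsetSum_apply, ← map_sum, sum_Ico_sub g hab]

end Grid

theorem RectTiling.sum_biadditive {A : Type*} [AddCommMonoid A] {r : ℝ} (hr : 0 ≤ r)
    (T : RectTiling r) (F : ℝ →+ ℝ →+ A) : ∑ k, F (T.w k) (T.h k) = F 1 r := by
  classical
  -- Refine all tiles to one grid: each grid cell lies in exactly one tile, as its centre shows.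
  obtain ⟨g, hg, hs⟩ := Finset.exists_strictMono_subset_range
    ({0, 1, r} ∪ univ.image T.px ∪ univ.image (fun k => T.px k + T.w k) ∪
      univ.image T.py ∪ univ.image (fun k => T.py k + T.h k))
  obtain ⟨i₀, hi₀⟩ := hs (by simp : (0 : ℝ) ∈ _)
  obtain ⟨i₁, hi₁⟩ := hs (by simp : (1 : ℝ) ∈ _)
  obtain ⟨iᵣ, hiᵣ⟩ := hs (by simp : r ∈ _)
  choose x₀ hx₀ using fun k => hs (by simp : T.px k ∈ _)
  choose x₁ hx₁ using fun k => hs (by simp : T.px k + T.w k ∈ _)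
  choose y₀ hy₀ using fun k => hs (by simp : T.py k ∈ _)
  choose y₁ hy₁ using fun k => hs (by simp : T.py k + T.h k ∈ _)
  have hcover : Set.Icc (g i₀) (g i₁) ×ˢ Set.Icc (g i₀) (g iᵣ) =
      ⋃ k, Set.Icc (g (x₀ k)) (g (x₁ k)) ×ˢ Set.Icc (g (y₀ k)) (g (y₁ k)) := by
    simpa only [hi₀, hi₁, hiᵣ, hx₀, hx₁, hy₀, hy₁] using T.cover
  have hdisj : ∀ k l, k ≠ l →
      Disjoint (Set.Ioo (g (x₀ k)) (g (x₁ k)) ×ˢ Set.Ioo (g (y₀ k)) (g (y₁ k)))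
        (Set.Ioo (g (x₀ l)) (g (x₁ l)) ×ˢ Set.Ioo (g (y₀ l)) (g (y₁ l))) := by
    simpa only [hx₀, hx₁, hy₀, hy₁] using T.disj
  set cells : Fin T.m → Finset (ℕ × ℕ) := fun k => Ico (x₀ k) (x₁ k) ×ˢ Ico (y₀ k) (y₁ k)
  have hunion : Ico i₀ i₁ ×ˢ Ico i₀ iᵣ = univ.biUnion cells := by
    ext ij
    simp only [← hg.cellCenter_mem_Icc_iff, hcover, Set.mem_iUnion, mem_biUnion, mem_univ, true_and,
      cells]
  have hcells_disj : Set.PairwiseDisjoint ↑(univ : Finset (Fin T.m)) cells :=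
    fun k _ l _ hkl => disjoint_left.2 fun ij hk hl => Set.disjoint_left.1 (hdisj k l hkl)
      ((hg.cellCenter_mem_Ioo_iff ij).2 hk) ((hg.cellCenter_mem_Ioo_iff ij).2 hl)
  have hidx : ∀ {a b : ℝ} {i j : ℕ}, g i = a → g j = b → a ≤ b → i ≤ j := by
    rintro a b i j rfl rfl hab
    exact hg.le_iff_le.1 hab
  calc ∑ k, F (T.w k) (T.h k)
      = ∑ k, ∑ ij ∈ cells k, F (g (ij.1 + 1) - g ij.1) (g (ij.2 + 1) - g ij.2) := by
        refine sum_congr rfl fun k _ => ?_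
        rw [sum_Ico_product_sub F g (hidx (hx₀ k) (hx₁ k) (by linarith [T.w_pos k]))
          (hidx (hy₀ k) (hy₁ k) (by linarith [T.h_pos k])), hx₀, hx₁, hy₀, hy₁]
        simp
    _ = F 1 r := by
        rw [← sum_biUnion hcells_disj, ← hunion,
          sum_Ico_product_sub F g (hidx hi₀ hi₁ zero_le_one) (hidx hi₀ hiᵣ hr), hi₀, hi₁, hiᵣ]
        simp

lemma Finset.exists_lt_sup'_of_injective {ι α : Type*} [Fintype ι] [Nontrivial ι]
    [LinearOrder α] {g : ι → α} (hg : Function.Injective g) (h : (univ : Finset ι).Nonempty) :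
    ∃ j, g j < univ.sup' h g := by
  obtain ⟨i, -, hi⟩ := exists_mem_eq_sup' h g
  obtain ⟨j, hj⟩ := exists_ne i
  exact ⟨j, (le_sup' g (mem_univ j)).lt_of_ne (hi ▸ hg.ne hj)⟩

section QuadraticIrrationals

variable {p : ℚ}

lemma pos_and_sq_lt_of_conj_neg (hp : 0 ≤ p) {a b : ℚ} (h₁ : 0 < (a : ℝ) + b * √p)
    (h₂ : (a : ℝ) - b * √p < 0) : 0 < b ∧ a ^ 2 < p * b ^ 2 := by
  have hsq : √(p : ℝ) * √p = p := Real.mul_self_sqrt (by exact_mod_cast hp)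
  have hb : (0 : ℝ) < b := by nlinarith [Real.sqrt_nonneg (p : ℝ)]
  have hab : (a : ℝ) ^ 2 < p * b ^ 2 := by nlinarith [mul_pos h₁ (neg_pos.2 h₂)]
  exact ⟨by exact_mod_cast hb, by exact_mod_cast hab⟩

lemma not_irrational_div_and_mul (hp : 0 ≤ p) {a b c d : ℚ} (hb : 0 < b) (hd : 0 < d)
    (hY : (c : ℝ) + d * √p ≠ 0) (h : |a| * d = |c| * b) :
    ¬ (Irrational ((a + b * √p) / (c + d * √p)) ∧ Irrational ((a + b * √p) * (c + d * √p))) := by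
  have hsq : √(p : ℝ) * √p = p := Real.mul_self_sqrt (by exact_mod_cast hp)
  rintro ⟨hdiv, hmul⟩
  rw [← abs_of_pos hb, ← abs_of_pos hd, ← abs_mul, ← abs_mul] at h
  rcases abs_eq_abs.1 h with h | h
  · have hR : (a : ℝ) * d = c * b := by exact_mod_cast h
    refine hdiv ⟨b / d, ?_⟩
    rw [Rat.cast_div, div_eq_div_iff (by exact_mod_cast hd.ne') hY]
    linear_combination -hR
  · have hR : (a : ℝ) * d = -(c * b) := by exact_mod_cast h
    refine hmul ⟨a * c + p * b * d, ?_⟩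
    push_cast
    linear_combination (-(b * d : ℝ)) * hsq - √(p : ℝ) * hR

lemma injective_abs_div_of_irrational {ι : Type*} (hp : 0 ≤ p) {a b : ι → ℚ} {X : ι → ℝ}
    (hX : ∀ i, X i = a i + b i * √p) (hXpos : ∀ i, 0 < X i) (hb : ∀ i, 0 < b i)
    (hdist : ∀ i j, i ≠ j → Irrational (X i / X j) ∧ Irrational (X i * X j)) :
    Function.Injective fun i => |a i| / b i := by
  intro i j hij
  by_contra hne
  rw [div_eq_div_iff (hb i).ne' (hb j).ne'] at hij
  have hXj : (a j : ℝ) + b j * √p ≠ 0 := hX j ▸ (hXpos j).ne'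
  exact not_irrational_div_and_mul hp (hb i) (hb j) hXj hij (hX i ▸ hX j ▸ hdist i j hne)

lemma sq_lt_of_abs_div_eq {a b e f : ℚ} (hb : 0 < b) (hf : 0 < f) (h : |e| / f = |a| / b)
    (hab : a ^ 2 < p * b ^ 2) : e ^ 2 < p * f ^ 2 := by
  rw [div_eq_div_iff hf.ne' hb.ne'] at h
  have h2 : e ^ 2 * b ^ 2 = a ^ 2 * f ^ 2 := by
    rw [← sq_abs e, ← sq_abs a, ← mul_pow, ← mul_pow, h]
  nlinarith [pow_pos hb 2, pow_pos hf 2]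

end QuadraticIrrationals

section SqrtCoordinates

variable (p : ℚ) (ψ : ℝ →ₗ[ℚ] ℚ)

noncomputable def sqrtPart : ℝ →ₗ[ℚ] ℚ := p⁻¹ • ψ ∘ₗ LinearMap.mulLeft ℚ √(p : ℝ)

lemma sqrtPart_apply (v : ℝ) : sqrtPart p ψ v = p⁻¹ * ψ (√p * v) := rfl

variable {p}

lemma map_add_mul_sqrt_mul (hp : p ≠ 0) (a b : ℚ) (v : ℝ) :
    ψ ((a + b * √p) * v) = a * ψ v + b * p * sqrtPart p ψ v := by
  have h : ((a : ℝ) + b * √p) * v = a • v + b • (√p * v) := by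
    rw [Rat.smul_def, Rat.smul_def]; ring
  rw [h, map_add, map_smul, map_smul, smul_eq_mul, smul_eq_mul, sqrtPart_apply]
  field_simp

lemma sqrtPart_add_mul_sqrt_mul (hp : 0 < p) (a b : ℚ) (v : ℝ) :
    sqrtPart p ψ ((a + b * √p) * v) = b * ψ v + a * sqrtPart p ψ v := by
  have hsq : √(p : ℝ) * √p = p := Real.mul_self_sqrt (by exact_mod_cast hp.le)
  have h : √(p : ℝ) * ((a + b * √p) * v) = a • (√p * v) + (b * p) • v := by
    rw [Rat.smul_def, Rat.smul_def]; push_cast; linear_combination (b * v) * hsq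
  rw [sqrtPart_apply, sqrtPart_apply, h, map_add, map_smul, map_smul, smul_eq_mul, smul_eq_mul]
  field_simp
  ring

lemma exists_rationalPart (hirr : Irrational √(p : ℝ)) :
    ∃ ψ : ℝ →ₗ[ℚ] ℚ, ψ 1 = 1 ∧ ψ √p = 0 := by
  have h1 : (1 : ℝ) ∉ Submodule.span ℚ {√(p : ℝ)} := by
    intro h
    obtain ⟨q, hq⟩ := Submodule.mem_span_singleton.1 h
    rw [Rat.smul_def] at hq
    exact hirr ⟨q⁻¹, by rw [Rat.cast_inv]; exact (eq_inv_of_mul_eq_one_right hq).symm⟩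
  obtain ⟨φ, hφ1, hφ⟩ := Submodule.exists_le_ker_of_notMem h1
  exact ⟨(φ 1)⁻¹ • φ, by simp [hφ1],
    by simp [LinearMap.mem_ker.1 (hφ (Submodule.mem_span_singleton_self _))]⟩

lemma exists_rationalPart_functional (hp : 0 < p) (hirr : Irrational √(p : ℝ)) {u : ℝ}
    (hu : u ≠ 0) :
    ∃ ψ : ℝ →ₗ[ℚ] ℚ, ψ 1 = 1 ∧ ψ √p = 0 ∧ (ψ u ≠ 0 ∨ ψ (√p * u) ≠ 0) := by
  obtain ⟨ψ₀, hψ₀1, hψ₀p⟩ := exists_rationalPart hirr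
  by_cases hW : u ∈ Submodule.span ℚ {1, √(p : ℝ)}
  · refine ⟨ψ₀, hψ₀1, hψ₀p, ?_⟩
    obtain ⟨c, d, rfl⟩ := Submodule.mem_span_pair.1 hW
    have hsq : √(p : ℝ) * √p = p := Real.mul_self_sqrt (by exact_mod_cast hp.le)
    have hψc : ψ₀ (c • 1 + d • √p) = c := by
      rw [map_add, map_smul, map_smul, hψ₀1, hψ₀p]; simp
    have hψd : ψ₀ (√p * (c • 1 + d • √p)) = d * p := by
      have h : √(p : ℝ) * (c • 1 + d • √p) = c • √(p : ℝ) + (d * p) • 1 := by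
        simp only [Rat.smul_def]; push_cast; linear_combination (d : ℝ) * hsq
      rw [h, map_add, map_smul, map_smul, hψ₀1, hψ₀p]; simp
    by_cases hc : c = 0
    · subst hc
      refine Or.inr (hψd ▸ mul_ne_zero (fun hd => hu ?_) hp.ne')
      simp [hd]
    · exact Or.inl (by rwa [hψc])
  · obtain ⟨ψ, hψ, hψu⟩ := LinearMap.exists_extend_of_notMem (ψ₀.domRestrict _) hW 1
    have hψW : ∀ v (hv : v ∈ Submodule.span ℚ {1, √(p : ℝ)}), ψ v = ψ₀ v := fun v hv =>
      congr($hψ ⟨v, hv⟩)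
    refine ⟨ψ, ?_, ?_, Or.inl (by simp [hψu])⟩
    · rw [hψW 1 (Submodule.subset_span (by simp)), hψ₀1]
    · rw [hψW _ (Submodule.subset_span (by simp)), hψ₀p]

end SqrtCoordinates

section DehnForm

variable {p e f : ℚ} {ψ : ℝ →ₗ[ℚ] ℚ}

lemma quadratic_nonpos {a b : ℚ} (hf : 0 ≤ f) (hab : |a| * f ≤ |e| * b)
    (hef : e ^ 2 ≤ p * f ^ 2) (s t : ℚ) :
    e * (a * f - e * b) * s ^ 2 - (p * f ^ 2 - e ^ 2) * (e * (a * f + e * b)) * t ^ 2 ≤ 0 := by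
  have key : |e * (a * f)| ≤ e ^ 2 * b := by
    rw [abs_mul, abs_mul, abs_of_nonneg hf, ← sq_abs e, sq, mul_assoc]
    exact mul_le_mul_of_nonneg_left hab (abs_nonneg e)
  have h₁ := mul_nonpos_of_nonpos_of_nonneg (by linarith [le_abs_self (e * (a * f))] :
    e * (a * f - e * b) ≤ 0) (sq_nonneg s)
  have h₂ := mul_nonneg (mul_nonneg (sub_nonneg.2 hef) (by linarith [neg_abs_le (e * (a * f))] :
    0 ≤ e * (a * f + e * b))) (sq_nonneg t)
  linarith

lemma quadratic_neg {a b : ℚ} (hf : 0 ≤ f) (hab : |a| * f < |e| * b)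
    (hef : e ^ 2 < p * f ^ 2) {s t : ℚ} (hst : s ≠ 0 ∨ t ≠ 0) :
    e * (a * f - e * b) * s ^ 2 - (p * f ^ 2 - e ^ 2) * (e * (a * f + e * b)) * t ^ 2 < 0 := by
  have he : 0 < |e| := by
    by_contra! he
    rw [le_antisymm he (abs_nonneg e), zero_mul] at hab
    linarith [mul_nonneg (abs_nonneg a) hf]
  have key : |e * (a * f)| < e ^ 2 * b := by
    rw [abs_mul, abs_mul, abs_of_nonneg hf, ← sq_abs e, sq, mul_assoc]
    exact mul_lt_mul_of_pos_left hab he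
  have h₁ : e * (a * f - e * b) < 0 := by linarith [le_abs_self (e * (a * f))]
  have h₂ : 0 < (p * f ^ 2 - e ^ 2) * (e * (a * f + e * b)) :=
    mul_pos (sub_pos.2 hef) (by linarith [neg_abs_le (e * (a * f))])
  rcases hst with hs | ht
  · nlinarith [mul_neg_of_neg_of_pos h₁ (pow_pos (abs_pos.2 hs) 2), sq_abs s, sq_nonneg t]
  · nlinarith [mul_pos h₂ (pow_pos (abs_pos.2 ht) 2), sq_abs t, sq_nonneg s]

variable (p e f ψ) in
noncomputable def dehnForm : ℝ →+ ℝ →+ ℚ :=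
  AddMonoidHom.mk' (fun v => AddMonoidHom.mk' (fun v' =>
      e * ((f * ψ v - e * sqrtPart p ψ v) * (f * ψ v' - e * sqrtPart p ψ v') -
        (p * f ^ 2 - e ^ 2) * (sqrtPart p ψ v * sqrtPart p ψ v')))
      fun _ _ => by simp only [map_add]; ring)
    fun _ _ => by ext; simp only [map_add, AddMonoidHom.mk'_apply, AddMonoidHom.add_apply]; ring

lemma dehnForm_apply (v v' : ℝ) : dehnForm p e f ψ v v' =
    e * ((f * ψ v - e * sqrtPart p ψ v) * (f * ψ v' - e * sqrtPart p ψ v') -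
      (p * f ^ 2 - e ^ 2) * (sqrtPart p ψ v * sqrtPart p ψ v')) := rfl

lemma dehnForm_comm (v v' : ℝ) : dehnForm p e f ψ v v' = dehnForm p e f ψ v' v := by
  simp only [dehnForm_apply]; ring

lemma dehnForm_one (hp : 0 < p) (hψ1 : ψ 1 = 1) (hψp : ψ √p = 0) :
    dehnForm p e f ψ 1 (e + f * √p) = 0 := by
  have hs : sqrtPart p ψ 1 = 0 := by rw [sqrtPart_apply, mul_one, hψp, mul_zero]
  rw [← mul_one ((e : ℝ) + f * √p), dehnForm_apply, map_add_mul_sqrt_mul ψ hp.ne',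
    sqrtPart_add_mul_sqrt_mul ψ hp, hψ1, hs]
  ring

lemma mul_dehnForm_mul_self (hp : 0 < p) (a b : ℚ) (u : ℝ) :
    f * dehnForm p e f ψ u ((a + b * √p) * u) =
      e * (a * f - e * b) * (f * ψ u - e * sqrtPart p ψ u) ^ 2 -
        (p * f ^ 2 - e ^ 2) * (e * (a * f + e * b)) * sqrtPart p ψ u ^ 2 := by
  rw [dehnForm_apply, map_add_mul_sqrt_mul ψ hp.ne', sqrtPart_add_mul_sqrt_mul ψ hp]
  ring

lemma dehnForm_mul_self_nonpos (hp : 0 < p) (hf : 0 < f) {a b : ℚ} (hb : 0 < b)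
    (hab : |a| / b ≤ |e| / f) (hef : e ^ 2 < p * f ^ 2) (u : ℝ) :
    dehnForm p e f ψ u ((a + b * √p) * u) ≤ 0 := by
  rw [div_le_div_iff₀ hb hf] at hab
  have := mul_dehnForm_mul_self (ψ := ψ) hp a b u ▸ quadratic_nonpos hf.le hab hef.le _ _
  exact nonpos_of_mul_nonpos_right this hf

lemma dehnForm_mul_self_neg (hp : 0 < p) (hf : 0 < f) {a b : ℚ} (hb : 0 < b)
    (hab : |a| / b < |e| / f) (hef : e ^ 2 < p * f ^ 2) {u : ℝ}
    (hu : ψ u ≠ 0 ∨ ψ (√p * u) ≠ 0) :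
    dehnForm p e f ψ u ((a + b * √p) * u) < 0 := by
  rw [div_lt_div_iff₀ hb hf] at hab
  have hst : f * ψ u - e * sqrtPart p ψ u ≠ 0 ∨ sqrtPart p ψ u ≠ 0 := by
    by_contra! h
    obtain ⟨h₁, h₂⟩ := h
    rw [h₂, mul_zero, sub_zero] at h₁
    rw [sqrtPart_apply] at h₂
    rcases hu with hu | hu
    · exact hu ((mul_eq_zero.1 h₁).resolve_left hf.ne')
    · exact hu ((mul_eq_zero.1 h₂).resolve_left (inv_ne_zero hp.ne'))
  have := mul_dehnForm_mul_self (ψ := ψ) hp a b u ▸ quadratic_neg hf.le hab hef hst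
  exact neg_of_mul_neg_right this hf.le

variable (p e f) in
lemma RectTiling.ratioOK.exists_dehnForm_eq {r x : ℝ} {T : RectTiling r} {k : Fin T.m}
    (h : T.ratioOK k x) :
    ∃ u, 0 < u ∧ ∀ ψ, dehnForm p e f ψ (T.w k) (T.h k) = dehnForm p e f ψ u (x * u) := by
  rcases h with h | h
  · rw [div_eq_iff (T.w_pos k).ne'] at h
    exact ⟨T.w k, T.w_pos k, fun ψ => by rw [h]⟩
  · rw [div_eq_iff (T.h_pos k).ne'] at h
    exact ⟨T.h k, T.h_pos k, fun ψ => by rw [h, dehnForm_comm]⟩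

end DehnForm

theorem no_diverse_tiling_neg_conj_boundary (p : ℚ) (hp : 0 < p)
    (hirr : Irrational (Real.sqrt p))
    (n : ℕ) (hn : 2 ≤ n) (a b : Fin n → ℚ) (X : Fin n → ℝ)
    (hX : ∀ i, X i = (a i : ℝ) + (b i : ℝ) * Real.sqrt p)
    (hXpos : ∀ i, 0 < X i)
    (hdist : ∀ i j, i ≠ j → Irrational (X i / X j) ∧ Irrational (X i * X j))
    (hconj : ∀ i, (a i : ℝ) - (b i : ℝ) * Real.sqrt p < 0)
    (e f : ℚ) (z : ℝ) (hz : z = (e : ℝ) + (f : ℝ) * Real.sqrt p) (hzpos : 0 < z)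
    (hf : 0 < f)
    (he : |e| / f = Finset.univ.sup' ⟨⟨0, by omega⟩, Finset.mem_univ _⟩
        (fun i => |a i| / b i)) :
    ¬ DiverselyTileable z X := by
  subst hz
  rintro ⟨T, hratio, hdiverse⟩
  have hb (i : Fin n) := pos_and_sq_lt_of_conj_neg hp.le (hX i ▸ hXpos i) (hconj i)
  have hle (i : Fin n) : |a i| / b i ≤ |e| / f :=
    he ▸ Finset.le_sup' (fun i => |a i| / b i) (Finset.mem_univ i)
  have hef : e ^ 2 < p * f ^ 2 := by
    obtain ⟨i, -, hi⟩ := Finset.exists_mem_eq_sup' _ fun i => |a i| / b i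
    exact sq_lt_of_abs_div_eq (hb i).1 hf (he.trans hi) (hb i).2
  have : Nontrivial (Fin n) := Fin.nontrivial_iff_two_le.2 hn
  obtain ⟨j, hj⟩ := Finset.exists_lt_sup'_of_injective
    (injective_abs_div_of_irrational hp.le hX hXpos (fun i => (hb i).1) hdist)
    Finset.univ_nonempty
  rw [← he] at hj
  obtain ⟨k, hk⟩ := hdiverse j
  obtain ⟨u, hu, hku⟩ := (hX j ▸ hk).exists_dehnForm_eq p e f
  obtain ⟨ψ, hψ1, hψp, hψu⟩ := exists_rationalPart_functional hp hirr hu.ne'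
  have hnonpos (k : Fin T.m) : dehnForm p e f ψ (T.w k) (T.h k) ≤ 0 := by
    obtain ⟨i, hi⟩ := hratio k
    obtain ⟨v, -, hkv⟩ := (hX i ▸ hi).exists_dehnForm_eq p e f
    exact hkv ψ ▸ dehnForm_mul_self_nonpos hp hf (hb i).1 (hle i) hef v
  have hsum := T.sum_biadditive hzpos.le (dehnForm p e f ψ)
  rw [dehnForm_one hp hψ1 hψp, Finset.sum_eq_zero_iff_of_nonpos fun k _ => hnonpos k] at hsum
  exact (hku ψ ▸ dehnForm_mul_self_neg hp hf (hb j).1 hj hef hψu).ne (hsum k (Finset.mem_univ k))
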